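/- arXiv:2408.07831 — 6 statements merged into one kernel-verified Lean document; each statement's English description precedes it below -/
import Mathlib

section
/- Let U, D, τ, z be real numbers and let η > 0. Define the pseudo-cost function ψ : ℝ → ℝ by ψ(u) = U − τ + (U/η − U + D + τ)·exp(u/η). Then ∫₀^z ψ(u) du + τ·z + (1 − z)·U = η·(ψ(z) − D). -/
lemma exp_div_integral (z η : ℝ) (hη : 0 < η) :
    (∫ u in (0 : ℝ)..z, Real.exp (u / η)) = η * (Real.exp (z / η) - 1) := by
  have h := intervalIntegral.integral_comp_div (a := 0) (b := z)
    (c := η) (f := fun u => Real.exp u) (ne_of_gt hη)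
  rw [h, integral_exp]
  simp [smul_eq_mul]

/-- Key pseudo-cost integral identity for PCM (closing computation of Theorem 3.2). -/
theorem pcm_pseudo_cost_identity (U D τ z η : ℝ) (hη : 0 < η)
    (ψ : ℝ → ℝ)
    (hψ : ∀ u, ψ u = U - τ + (U / η - U + D + τ) * Real.exp (u / η)) :
    (∫ u in (0 : ℝ)..z, ψ u) + τ * z + (1 - z) * U = η * (ψ z - D) := by
  have hI : (∫ u in (0 : ℝ)..z, ψ u)
      = (U - τ) * z + (U / η - U + D + τ) * (η * (Real.exp (z / η) - 1)) := by
    simp only [hψ]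
    rw [intervalIntegral.integral_add (intervalIntegrable_const) ((show Continuous fun u : ℝ => (U / η - U + D + τ) * Real.exp (u / η) by fun_prop).intervalIntegrable _ _),
      intervalIntegral.integral_const,
      intervalIntegral.integral_const_mul, exp_div_integral z η hη]
    simp [smul_eq_mul]; ring
  rw [hI, hψ]
  field_simp
  ring
end

section
/- Let U, D, τ, L, z be real numbers and let η > 0. Define ψ : ℝ → ℝ by ψ(u) = U − τ + (U/η − U + D + τ)·exp(u/η). Then ∫₀^z ψ(u) du + τ·z + (1 − z)·U ≤ η·max(ψ(z) − D, L). -/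
/-!
The pseudo-cost ψ is the solution of `η ψ' = ψ - U + τ` with `η (ψ 0 - D) = U`; these are exactly
the conditions under which `∫₀^z ψ + τ z + (1 - z) U` and `η (ψ z - D)` have the same derivative and
the same value at `0`. Hence the two agree for every `z`, and the theorem follows from
`ψ z - D ≤ max (ψ z - D) L`.
-/

open Real

theorem integral_exp_div {η : ℝ} (hη : η ≠ 0) (a b : ℝ) :
    ∫ u in a..b, exp (u / η) = η * (exp (b / η) - exp (a / η)) := by
  rw [intervalIntegral.integral_comp_div exp hη, integral_exp, smul_eq_mul]

theorem integral_const_add_mul_exp_div {η : ℝ} (hη : η ≠ 0) (a c z : ℝ) :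
    ∫ u in (0 : ℝ)..z, (a + c * exp (u / η)) = a * z + c * η * (exp (z / η) - 1) := by
  have hexp : IntervalIntegrable (fun u => c * exp (u / η)) MeasureTheory.volume 0 z :=
    (by fun_prop : Continuous fun u => c * exp (u / η)).intervalIntegrable 0 z
  rw [intervalIntegral.integral_add intervalIntegrable_const hexp,
    intervalIntegral.integral_const, intervalIntegral.integral_const_mul, integral_exp_div hη]
  simp only [smul_eq_mul, sub_zero, zero_div, exp_zero]
  ring

theorem integral_pseudoCost_add_eq {U D τ η : ℝ} (hη : η ≠ 0) (z : ℝ) :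
    (∫ u in (0 : ℝ)..z, (U - τ + (U / η - U + D + τ) * exp (u / η))) + τ * z + (1 - z) * U
      = η * (U - τ + (U / η - U + D + τ) * exp (z / η) - D) := by
  rw [integral_const_add_mul_exp_div hη]
  field_simp
  ring

/-- Pseudo-cost upper bound against max(ψ(z) − D, L) (Theorem 3.2, PCM competitiveness). -/
theorem pcm_pseudo_cost_le (U D τ L z η : ℝ) (hη : 0 < η)
    (ψ : ℝ → ℝ)
    (hψ : ∀ u, ψ u = U - τ + (U / η - U + D + τ) * Real.exp (u / η)) :
    (∫ u in (0 : ℝ)..z, ψ u) + τ * z + (1 - z) * U ≤ η * max (ψ z - D) L := by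
  obtain rfl : ψ = fun u => U - τ + (U / η - U + D + τ) * Real.exp (u / η) := funext hψ
  rw [integral_pseudoCost_add_eq hη.ne']
  exact mul_le_mul_of_nonneg_left (le_max_left _ _) hη.le
end

section
/- Let U, D, τ, z be real numbers and let γ > 0. Define ψᵉ : ℝ → ℝ by ψᵉ(u) = U + D − τ + ((U + D)/γ − U + D + τ)·exp(u/γ). Then ∫₀^z ψᵉ(u) du + τ·z + (1 − z)·(U + D) = γ·(ψᵉ(z) − 2D). -/
/-- Pseudo-cost integral identity for ST-CLIP's ψᵉ (robustness analysis, Theorem 4.1). -/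
theorem stclip_pseudo_cost_identity (U D τ z γ : ℝ) (hγ : 0 < γ)
    (ψε : ℝ → ℝ)
    (hψε : ∀ u, ψε u = U + D - τ + ((U + D) / γ - U + D + τ) * Real.exp (u / γ)) :
    (∫ u in (0 : ℝ)..z, ψε u) + τ * z + (1 - z) * (U + D) = γ * (ψε z - 2 * D) := by
  have hint : (∫ u in (0:ℝ)..z, Real.exp (u / γ)) = γ * (Real.exp (z / γ) - 1) := by
    rw [intervalIntegral.integral_comp_div (c := γ) Real.exp (ne_of_gt hγ)]
    simp
  have hcont : Continuous fun u : ℝ => Real.exp (u / γ) :=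
    Real.continuous_exp.comp (continuous_id.div_const γ)
  have h : (∫ u in (0:ℝ)..z, ψε u)
      = (U + D - τ) * z + ((U + D) / γ - U + D + τ) * (γ * (Real.exp (z / γ) - 1)) := by
    simp only [hψε]
    rw [intervalIntegral.integral_add intervalIntegrable_const
      ((hcont.intervalIntegrable 0 z).const_mul _),
      intervalIntegral.integral_const_mul, hint]
    simp only [intervalIntegral.integral_const, smul_eq_mul, sub_zero]
    ring
  rw [h, hψε]
  field_simp
  ring
end

section
/- Let E be a real normed vector space, let f : E → ℝ and c : E → ℝ be continuous linear maps, let k₀ ∈ E, z₀ ∈ ℝ, and let ψ : ℝ → ℝ be antitone (monotone non-increasing). Then the function h : E → ℝ defined by h(k) = f(k) + ‖k − k₀‖ − ∫_{z₀}^{z₀ + c(k)} ψ(u) du is convex on E. -/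
open intervalIntegral MeasureTheory

lemma concave_primitive_of_antitone (ψ : ℝ → ℝ) (hψ : Antitone ψ) (z₀ : ℝ) :
    ConcaveOn ℝ Set.univ (fun x => ∫ u in z₀..x, ψ u) := by
  set F : ℝ → ℝ := fun x => ∫ u in z₀..x, ψ u with hF
  have hint : ∀ a b : ℝ, IntervalIntegrable ψ volume a b := fun a b =>
    hψ.intervalIntegrable
  have key : ∀ a b : ℝ, a ≤ b → ∀ t s : ℝ, 0 ≤ t → 0 ≤ s → t + s = 1 →
      t * F a + s * F b ≤ F (t * a + s * b) := by
    intro a b hab t s ht hs hts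
    have hs1 : s = 1 - t := by linarith
    set m := t * a + s * b with hm
    set P := (b - a) * ψ m with hP
    have hma : m - a = s * (b - a) := by rw [hm, hs1]; ring
    have hbm : b - m = t * (b - a) := by rw [hm, hs1]; ring
    have ham : a ≤ m := by
      have := mul_nonneg hs (sub_nonneg.2 hab); linarith
    have hmb : m ≤ b := by
      have := mul_nonneg ht (sub_nonneg.2 hab); linarith
    have h1 : F a ≤ F m - s * P := by
      have hdiff : F m - F a = ∫ u in a..m, ψ u := by
        rw [hF, intervalIntegral.integral_interval_sub_left (hint z₀ m) (hint z₀ a)]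
      have hlb : (m - a) * ψ m ≤ F m - F a := by
        rw [hdiff]
        calc (m - a) * ψ m = ∫ _ in a..m, ψ m := by
              rw [intervalIntegral.integral_const, smul_eq_mul]
          _ ≤ ∫ u in a..m, ψ u := by
              apply intervalIntegral.integral_mono_on ham
                intervalIntegrable_const (hint a m)
              intro x hx; exact hψ hx.2
      have : s * P = (m - a) * ψ m := by rw [hP, hma]; ring
      linarith
    have h2 : F b ≤ F m + t * P := by
      have hdiff : F b - F m = ∫ u in m..b, ψ u := by
        rw [hF, intervalIntegral.integral_interval_sub_left (hint z₀ b) (hint z₀ m)]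
      have hub : F b - F m ≤ (b - m) * ψ m := by
        rw [hdiff]
        calc (∫ u in m..b, ψ u) ≤ ∫ _ in m..b, ψ m := by
              apply intervalIntegral.integral_mono_on hmb (hint m b)
                intervalIntegrable_const
              intro x hx; exact hψ hx.1
          _ = (b - m) * ψ m := by rw [intervalIntegral.integral_const, smul_eq_mul]
      have : t * P = (b - m) * ψ m := by rw [hP, hbm]; ring
      linarith
    have e1 := mul_le_mul_of_nonneg_left h1 ht
    have e2 := mul_le_mul_of_nonneg_left h2 hs
    rw [mul_sub, ← mul_assoc] at e1
    rw [mul_add, ← mul_assoc] at e2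
    have hcomm : s * t * P = t * s * P := by ring
    have hFm : t * F m + s * F m = F m := by rw [← add_mul, hts, one_mul]
    linarith
  refine ⟨convex_univ, ?_⟩
  intro x _ y _ t s ht hs hts
  simp only [smul_eq_mul]
  rcases le_total x y with h | h
  · exact key x y h t s ht hs hts
  · have := key y x h s t hs ht (by linarith)
    rw [show s * y + t * x = t * x + s * y from by ring] at this
    linarith
/-- Theorem 3.1: the pseudo-cost minimization objective of PCM is convex. -/
theorem pseudo_cost_objective_convex {E : Type*} [NormedAddCommGroup E] [NormedSpace ℝ E]
    (f c : E →L[ℝ] ℝ) (k₀ : E) (z₀ : ℝ) (ψ : ℝ → ℝ) (hψ : Antitone ψ) :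
    ConvexOn ℝ Set.univ
      (fun k : E => f k + ‖k - k₀‖ - ∫ u in z₀..(z₀ + c k), ψ u) := by
  have hF := concave_primitive_of_antitone ψ hψ z₀
  have hf : ConvexOn ℝ Set.univ (fun k : E => f k) :=
    ⟨convex_univ, fun x _ y _ t s ht hs hts => by
      simp [map_add, ContinuousLinearMap.map_smul, smul_eq_mul]⟩
  have hnorm : ConvexOn ℝ Set.univ (fun k : E => ‖k - k₀‖) := by
    refine ⟨convex_univ, fun x _ y _ t s ht hs hts => ?_⟩
    have hxy : t • x + s • y - k₀ = t • (x - k₀) + s • (y - k₀) := by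
      rw [show s = 1 - t from by linarith]; module
    simp only [smul_eq_mul]
    calc ‖t • x + s • y - k₀‖ = ‖t • (x - k₀) + s • (y - k₀)‖ := by rw [hxy]
      _ ≤ ‖t • (x - k₀)‖ + ‖s • (y - k₀)‖ := norm_add_le _ _
      _ = t * ‖x - k₀‖ + s * ‖y - k₀‖ := by
          rw [norm_smul, norm_smul, Real.norm_of_nonneg ht, Real.norm_of_nonneg hs]
  have h2 : ConvexOn ℝ Set.univ (fun k : E => -(∫ u in z₀..(z₀ + c k), ψ u)) := by
    refine ⟨convex_univ, fun x _ y _ t s ht hs hts => ?_⟩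
    have hkey := hF.2 (Set.mem_univ (z₀ + c x)) (Set.mem_univ (z₀ + c y)) ht hs hts
    have heq : t • (z₀ + c x) + s • (z₀ + c y) = z₀ + c (t • x + s • y) := by
      simp only [smul_eq_mul, map_add, ContinuousLinearMap.map_smul]
      rw [show s = 1 - t from by linarith]; ring
    rw [heq] at hkey
    simp only [smul_eq_mul] at hkey ⊢
    linarith
  have h1 := (hf.add hnorm).add h2
  have heq : (fun k : E => f k + ‖k - k₀‖ - ∫ u in z₀..(z₀ + c k), ψ u)
      = fun k : E => (f k + ‖k - k₀‖) + -(∫ u in z₀..(z₀ + c k), ψ u) := by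
    funext k; ring
  rw [heq]; exact h1
end

section
/- Let U, L, D, τ be real numbers with 0 < L, 0 ≤ D, 0 ≤ τ, and D + 2τ < U − L. Then there exists a unique η with η > U/(U − D) such that log((U − L − D − 2τ)/(U − U/η − D)) = 1/η; in particular this η satisfies η > 1. -/
set_option maxHeartbeats 1000000 in
/-- Well-definedness of the optimal competitive ratio η of Theorems 3.2 and 3.3:
the transcendental equation has a unique solution η > U/(U − D), and it satisfies η > 1. -/
theorem eta_exists_unique (U L D τ : ℝ)
    (hL : 0 < L) (hD : 0 ≤ D) (hτ : 0 ≤ τ) (h : D + 2 * τ < U - L) :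
    ∃ η : ℝ, U / (U - D) < η ∧
      Real.log ((U - L - D - 2 * τ) / (U - U / η - D)) = 1 / η ∧
      1 < η ∧
      ∀ η' : ℝ, U / (U - D) < η' →
        Real.log ((U - L - D - 2 * τ) / (U - U / η' - D)) = 1 / η' → η' = η := by
  set C := U - L - D - 2 * τ with hCdef
  have hCpos : 0 < C := by simp only [hCdef]; linarith
  have hUD : 0 < U - D := by linarith
  have hU : 0 < U := by linarith
  have hCUD : C < U - D := by simp only [hCdef]; linarith
  set f : ℝ → ℝ := fun t => Real.log (U - D - U * t) + t with hfdef
  have fval : ∀ t, f t = Real.log (U - D - U * t) + t := fun t => rfl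
  -- strict decrease
  have key : ∀ s t : ℝ, 0 ≤ s → s < t → 0 < U - D - U * t → f t < f s := by
    intro s t hs hst hxt
    have hxs : U - D - U * t < U - D - U * s := by nlinarith
    have hxspos : 0 < U - D - U * s := lt_trans hxt hxs
    have hxsU : U - D - U * s ≤ U := by nlinarith
    have hratio : (U - D - U * t) / (U - D - U * s) ≠ 1 := by
      intro hh
      have := (div_eq_one_iff_eq (ne_of_gt hxspos)).mp hh
      linarith
    have hlog : Real.log ((U - D - U * t) / (U - D - U * s)) <
        (U - D - U * t) / (U - D - U * s) - 1 :=
      Real.log_lt_sub_one_of_pos (by positivity) hratio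
    have hdiv : (U - D - U * t) / (U - D - U * s) - 1 ≤ s - t := by
      rw [sub_le_iff_le_add, div_le_iff₀ hxspos]
      nlinarith
    have hsplit : Real.log ((U - D - U * t) / (U - D - U * s)) =
        Real.log (U - D - U * t) - Real.log (U - D - U * s) :=
      Real.log_div (ne_of_gt hxt) (ne_of_gt hxspos)
    rw [fval, fval]
    linarith [hsplit ▸ hlog]
  -- choose right endpoint b
  have he1 : (1:ℝ) < Real.exp 1 := by
    have := Real.add_one_lt_exp (x := 1) one_ne_zero; linarith
  set b : ℝ := (U - D - C / Real.exp 1) / U with hbdef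
  have hCe : 0 < C / Real.exp 1 := by positivity
  have hCeC : C / Real.exp 1 < C := by
    rw [div_lt_iff₀ (by positivity)]; nlinarith
  have hb0 : 0 < b := by
    apply div_pos _ hU; linarith
  have hbUD : b < (U - D) / U := by
    rw [hbdef, div_lt_div_iff₀ hU hU]; nlinarith
  have hb1 : b < 1 := by
    rw [hbdef, div_lt_one hU]; linarith
  have hxb : U - D - U * b = C / Real.exp 1 := by
    rw [hbdef]; field_simp; ring
  -- values at endpoints
  have hf0 : f 0 = Real.log (U - D) := by rw [fval]; norm_num
  have hfb : f b < Real.log C := by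
    have hfb' : f b = Real.log C - 1 + b := by
      rw [fval, hxb, Real.log_div (ne_of_gt hCpos) (Real.exp_ne_zero 1), Real.log_exp]
    linarith
  have hf0gt : Real.log C < f 0 := by
    rw [hf0]; exact Real.log_lt_log hCpos hCUD
  -- continuity
  have hcont : ContinuousOn f (Set.Icc 0 b) := by
    apply ContinuousOn.add _ continuousOn_id
    apply ContinuousOn.log
    · fun_prop
    · intro x hx
      have h1 : U - D - U * b ≤ U - D - U * x := by nlinarith [hx.2]
      have : 0 < U - D - U * x := by rw [hxb] at h1; linarith
      exact ne_of_gt this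
  obtain ⟨t₀, ht₀mem, ht₀⟩ := intermediate_value_Ioo' (le_of_lt hb0) hcont
    (Set.mem_Ioo.mpr ⟨hfb, hf0gt⟩)
  obtain ⟨ht₀0, ht₀b⟩ := ht₀mem
  have ht₀' : Real.log (U - D - U * t₀) + t₀ = Real.log C := by rw [← fval]; exact ht₀
  have ht₀UD : t₀ < (U - D) / U := lt_trans ht₀b hbUD
  have hxt₀ : 0 < U - D - U * t₀ := by
    linarith [(lt_div_iff₀ hU).mp ht₀UD]
  refine ⟨1 / t₀, ?_, ?_, ?_, ?_⟩
  · rw [div_lt_div_iff₀ hUD ht₀0]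
    nlinarith [(lt_div_iff₀ hU).mp ht₀UD]
  · have h1 : U - U / (1 / t₀) - D = U - D - U * t₀ := by
      rw [div_div_eq_mul_div, div_one]; ring
    rw [h1, one_div_one_div, Real.log_div (ne_of_gt hCpos) (ne_of_gt hxt₀)]
    linarith
  · rw [lt_div_iff₀ ht₀0]; linarith
  · intro η' hη' heq
    have haux : (1:ℝ) ≤ U / (U - D) := by
      rw [le_div_iff₀ hUD]; linarith
    have hη'pos : 0 < η' := lt_of_lt_of_le one_pos (le_of_lt (lt_of_le_of_lt haux hη'))
    set t' : ℝ := 1 / η' with ht'def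
    have ht'pos : 0 < t' := by positivity
    have ht'UD : t' < (U - D) / U := by
      rw [ht'def, div_lt_div_iff₀ hη'pos hU]
      have h2 := (div_lt_iff₀ hUD).mp hη'
      linarith
    have hxt' : 0 < U - D - U * t' := by
      linarith [(lt_div_iff₀ hU).mp ht'UD]
    have hrw : U - U / η' - D = U - D - U * t' := by
      rw [ht'def, mul_one_div]; ring
    rw [hrw, Real.log_div (ne_of_gt hCpos) (ne_of_gt hxt')] at heq
    have hft' : f t' = Real.log C := by
      rw [fval]; linarith
    have htt : t' = t₀ := by
      rcases lt_trichotomy t' t₀ with hc | hc | hc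
      · have := key t' t₀ (le_of_lt ht'pos) hc hxt₀
        rw [hft', ht₀] at this; exact absurd this (lt_irrefl _)
      · exact hc
      · have := key t₀ t' (le_of_lt ht₀0) hc hxt'
        rw [hft', ht₀] at this; exact absurd this (lt_irrefl _)
    have h5 : 1 / η' = t₀ := by rw [← htt]
    rw [← h5, one_div_one_div]
end

section
/- Let U, L, D, τ, ε be real numbers with 0 < L < U, 0 ≤ D, 0 ≤ τ, D + 2τ < U − L, and ε > 0. Then there exists γ with U/(U − D − 2τ) < γ < U/L such that γ = ε + U/L − (γ·(U − L + D)/L)·log((U − L − D − 2τ)/(U − U/γ − D − 2τ)). -/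
open Real Filter Topology Set

/-- Existence of the target robustness factor γ^(ε) of ST-CLIP (equation (2),
Theorems 4.1 and 4.2) in the interval (U/(U − D − 2τ), U/L). -/
theorem gamma_exists (U L D τ ε : ℝ)
    (hL : 0 < L) (hLU : L < U) (hD : 0 ≤ D) (hτ : 0 ≤ τ)
    (h : D + 2 * τ < U - L) (hε : 0 < ε) :
    ∃ γ : ℝ, U / (U - D - 2 * τ) < γ ∧ γ < U / L ∧
      γ = ε + U / L -
        (γ * (U - L + D) / L) *
          Real.log ((U - L - D - 2 * τ) / (U - U / γ - D - 2 * τ)) := by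
  have hU : (0:ℝ) < U := hL.trans hLU
  have hKpos : (0:ℝ) < U - L - D - 2 * τ := by linarith
  have hUD : L < U - D - 2 * τ := by linarith
  have hUDpos : (0:ℝ) < U - D - 2 * τ := hL.trans hUD
  set K : ℝ := U - L - D - 2 * τ with hK
  set a : ℝ := U / (U - D - 2 * τ) with ha
  set b : ℝ := U / L with hb
  have hapos : 0 < a := div_pos hU hUDpos
  have hab : a < b := div_lt_div_of_pos_left hU hL hUD
  have hUa : U / a = U - D - 2 * τ := by
    rw [ha]; field_simp
  -- positivity of the inner expression for γ > a
  have hg : ∀ γ : ℝ, a < γ → 0 < U - U / γ - D - 2 * τ := by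
    intro γ hγ
    have hγpos : 0 < γ := hapos.trans hγ
    have : U / γ < U / a := div_lt_div_of_pos_left hU hapos hγ
    rw [hUa] at this
    linarith
  set f : ℝ → ℝ := fun γ => γ - ε - U / L +
      γ * (U - L + D) / L * Real.log (K / (U - U / γ - D - 2 * τ)) with hf
  -- value at b
  have hgb : U - U / b - D - 2 * τ = K := by
    rw [hb]
    have : U / (U / L) = L := by field_simp
    rw [this, hK]
  have hfb : f b = -ε := by
    have hKK : K / K = 1 := div_self hKpos.ne'
    simp only [hf, hgb, hKK, Real.log_one, mul_zero]
    rw [hb]; ring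
  -- tendsto at a from the right
  have htg : Tendsto (fun γ : ℝ => U - U / γ - D - 2 * τ) (𝓝[>] a) (𝓝[>] (0:ℝ)) := by
    rw [tendsto_nhdsWithin_iff]
    constructor
    · have hcont : ContinuousAt (fun γ : ℝ => U - U / γ - D - 2 * τ) a := by
        fun_prop (disch := exact hapos.ne')
      have := hcont.continuousWithinAt (s := Ioi a)
      have hva : U - U / a - D - 2 * τ = 0 := by rw [hUa]; ring
      simpa [ContinuousWithinAt, hva] using this
    · filter_upwards [self_mem_nhdsWithin] with γ hγ
      exact hg γ hγ
  have htlog : Tendsto (fun γ : ℝ => Real.log (K / (U - U / γ - D - 2 * τ)))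
      (𝓝[>] a) atTop := by
    apply Real.tendsto_log_atTop.comp
    have hinv : Tendsto (fun γ : ℝ => (U - U / γ - D - 2 * τ)⁻¹) (𝓝[>] a) atTop :=
      htg.inv_tendsto_nhdsGT_zero
    have := hinv.const_mul_atTop hKpos
    simpa [div_eq_mul_inv] using this
  have htcoef : Tendsto (fun γ : ℝ => γ * (U - L + D) / L) (𝓝[>] a)
      (𝓝 (a * (U - L + D) / L)) := by
    apply tendsto_nhdsWithin_of_tendsto_nhds
    exact ((continuous_id.mul continuous_const).div_const L).tendsto a
  have hcoefpos : 0 < a * (U - L + D) / L := by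
    apply div_pos _ hL
    apply mul_pos hapos
    linarith
  have htprod : Tendsto (fun γ : ℝ => γ * (U - L + D) / L *
      Real.log (K / (U - U / γ - D - 2 * τ))) (𝓝[>] a) atTop :=
    htcoef.pos_mul_atTop hcoefpos htlog
  have htf : Tendsto f (𝓝[>] a) atTop := by
    have hlin : Tendsto (fun γ : ℝ => γ - ε - U / L) (𝓝[>] a) (𝓝 (a - ε - U / L)) := by
      apply tendsto_nhdsWithin_of_tendsto_nhds
      exact ((continuous_id.sub continuous_const).sub continuous_const).tendsto a
    exact hlin.add_atTop htprod
  -- find c ∈ (a, b) with f c > 0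
  have hev : ∀ᶠ γ in 𝓝[>] a, 0 < f γ ∧ γ ∈ Ioo a b := by
    filter_upwards [htf.eventually (eventually_gt_atTop 0),
      Ioo_mem_nhdsGT_of_mem ⟨le_refl a, hab⟩] with γ h1 h2
    exact ⟨h1, h2⟩
  obtain ⟨c, hfc, hca, hcb⟩ : ∃ c, 0 < f c ∧ a < c ∧ c < b := by
    obtain ⟨c, hc1, hc2⟩ := hev.exists
    exact ⟨c, hc1, hc2.1, hc2.2⟩
  -- continuity of f on [c, b]
  have hfcont : ContinuousOn f (Icc c b) := by
    have hpos : ∀ γ ∈ Icc c b, 0 < U - U / γ - D - 2 * τ := by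
      intro γ hγ
      exact hg γ (hca.trans_le hγ.1)
    have hne : ∀ γ ∈ Icc c b, γ ≠ 0 := fun γ hγ =>
      (hapos.trans (hca.trans_le hγ.1)).ne'
    apply continuousOn_of_forall_continuousAt
    intro γ hγ
    have h1 : γ ≠ 0 := hne γ hγ
    have h2 : U - U / γ - D - 2 * τ ≠ 0 := (hpos γ hγ).ne'
    have h3 : K / (U - U / γ - D - 2 * τ) ≠ 0 := (div_pos hKpos (hpos γ hγ)).ne'
    fun_prop (disch := first | exact h1 | exact h2 | exact h3)
  -- IVT
  have hsub := intermediate_value_Icc' hcb.le hfcont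
  have h0 : (0:ℝ) ∈ Icc (f b) (f c) := by
    rw [hfb]; exact ⟨by linarith, hfc.le⟩
  obtain ⟨γ, hγmem, hγval⟩ := hsub h0
  refine ⟨γ, hca.trans_le hγmem.1, lt_of_le_of_ne hγmem.2 ?_, ?_⟩
  · intro hgb'
    rw [hgb'] at hγval
    rw [hfb] at hγval
    linarith
  · have : γ - ε - U / L + γ * (U - L + D) / L *
        Real.log (K / (U - U / γ - D - 2 * τ)) = 0 := hγval
    rw [hK] at this
    linarith
end
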